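/- There exists an absolute constant C > 0 with the following property. In the Algorithm 2 setting, write wⱼ = y⁽ʲ⁾⊛z⁽ʲ⁾. Then for every integer t_s/ε ≤ i ≤ 1/ε: F(wᵢ) ≥ (1−m)·(εi − t_s)·(1−ε)^{i−1}·F(p₂*) + (1−ε)^{i − t_s/ε}·F(w_{t_s/ε}) − (i − t_s/ε)·Cε²βD². -/

import Mathlib

/-!
Along a nonnegative direction `d`, DR-submodularity makes `t ↦ F (x + t • d)` concave on
`[0, 1]`: its derivative `⟪∇F (x + t • d), d⟫` is antitone, being a limit of difference quotients
that DR-submodularity orders. Concavity yields the first-order bounds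
`⟪∇F (x + d), d⟫ ≤ F (x + d) - F x ≤ ⟪∇F x, d⟫` and, as `F ≥ 0`, the bound
`F (x ⊛ p) ≥ (1 - c) F p` when `x ≤ c`.

An induction over the iterations shows `(1 - m)(1 - ε)^i ≤ (1 - yᵢ)(1 - zᵢ) = 1 - wᵢ`
coordinatewise. In the second phase `y` is frozen, so `wᵢ₊₁ = wᵢ + ε (1 - wᵢ) ⊙ bᵢ₊₁`;
β-smoothness, the optimality of `bᵢ₊₁` against `p₂*`, and the two bounds above give
`F wᵢ₊₁ ≥ (1 - ε) F wᵢ + ε (1 - m)(1 - ε)^i F p₂* - ε² β D²`, and unrolling this recurrence from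
`i = t_s/ε` gives the claim with `C = 1`.
-/

open scoped InnerProductSpace
open Pointwise

noncomputable section

/-- Vectors in `ℝ^n`, with the Euclidean (ℓ₂) norm and inner product. -/
abbrev Vec (n : ℕ) := EuclideanSpace ℝ (Fin n)

/-- Membership in the box `[0,1]^n`. -/
def inBox {n : ℕ} (x : Vec n) : Prop := ∀ j, 0 ≤ x j ∧ x j ≤ 1

/-- Coordinate-wise (Hadamard) product `x ⊙ y`. -/
def had {n : ℕ} (x y : Vec n) : Vec n := WithLp.toLp 2 (fun j => x j * y j)

/-- Coordinate-wise probabilistic sum `x ⊛ y`. -/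
def psum {n : ℕ} (x y : Vec n) : Vec n := WithLp.toLp 2 (fun j => x j + y j - x j * y j)

/-- The vector `1 - x` (coordinate-wise). -/
def oneM {n : ℕ} (x : Vec n) : Vec n := WithLp.toLp 2 (fun j => 1 - x j)

/-- ℓ∞-norm. -/
def normInf {n : ℕ} (x : Vec n) : ℝ := ⨆ j, |x j|

/-- DR-submodularity of `F : [0,1]^n → ℝ`. -/
def DRSubmodular {n : ℕ} (F : Vec n → ℝ) : Prop :=
  ∀ a b : Vec n, inBox a → inBox b → (∀ j, a j ≤ b j) →
    ∀ k : ℝ, 0 < k → ∀ i : Fin n, inBox (b + EuclideanSpace.single i k) →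
      F (b + EuclideanSpace.single i k) - F b ≤ F (a + EuclideanSpace.single i k) - F a

/-- `P` is down-closed (with respect to the domain `[0,1]^n`). -/
def downClosed {n : ℕ} (P : Set (Vec n)) : Prop :=
  ∀ x y : Vec n, (∀ j, 0 ≤ x j) → (∀ j, x j ≤ y j) → y ∈ P → x ∈ P

/-- The Algorithm 2 setting (`Frank-Wolfe/Continuous-Greedy Hybrid`): `Q ⊆ [0,1]^n` convex,
`P ⊆ [0,1]^n` down-closed convex, `F : [0,1]^n → [0,∞)` nonnegative β-smooth DR-submodular
with gradient `G`, `ε ∈ (0, 1/30]` with `1/ε = N ∈ ℕ`, `t_s ∈ [0,1]` with `t_s/ε = k ∈ ℕ`,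
`m = ‖y⁽⁰⁾‖∞ < 1`, and in each iteration `(a⁽ⁱ⁾, b⁽ⁱ⁾)` solves the corresponding linear
program (phase 1 for `i ≤ t_s/ε`, phase 2 otherwise). -/
structure Alg2Setting {n : ℕ} (Q P : Set (Vec n)) (F : Vec n → ℝ) (G : Vec n → Vec n)
    (β ts ε : ℝ) (k N : ℕ) (y z a b : ℕ → Vec n) : Prop where
  hQbox : ∀ x ∈ Q, inBox x
  hQconv : Convex ℝ Q
  hPbox : ∀ x ∈ P, inBox x
  hPconv : Convex ℝ P
  hPdown : downClosed P
  hF0 : ∀ x, inBox x → 0 ≤ F x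
  hDR : DRSubmodular F
  hGrad : ∀ x, inBox x → HasGradientAt F (G x) x
  hGcont : ContinuousOn G {x : Vec n | inBox x}
  hβ : 0 < β
  hsmooth : ∀ u v : Vec n, inBox u → inBox v → ‖G u - G v‖ ≤ β * ‖u - v‖
  hε0 : 0 < ε
  hε30 : ε ≤ 1/30
  hεN : (N : ℝ) * ε = 1
  hts0 : 0 ≤ ts
  hts1 : ts ≤ 1
  hk : (k : ℝ) * ε = ts
  hy0Q : y 0 ∈ Q
  hy0min : ∀ x ∈ Q, normInf (y 0) ≤ normInf x
  hm1 : normInf (y 0) < 1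
  hz0 : z 0 = 0
  hyrec : ∀ i, 1 ≤ i → i ≤ N → y i = (1-ε) • y (i-1) + ε • a i
  hzrec : ∀ i, 1 ≤ i → i ≤ N → z i = z (i-1) + ε • had (oneM (z (i-1))) (b i)
  hphase1 : ∀ i, 1 ≤ i → i ≤ k →
    a i ∈ Q ∧ b i ∈ P ∧ (∀ j, 0 ≤ a i j + b i j ∧ a i j + b i j ≤ 1) ∧
    ∀ a' b' : Vec n, a' ∈ Q → b' ∈ P → (∀ j, 0 ≤ a' j + b' j ∧ a' j + b' j ≤ 1) →
      Real.exp (2*ε*i) * ⟪had (G (psum (y (i-1)) (z (i-1)))) (oneM (z (i-1))),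
          a' + had b' (oneM (y (i-1)))⟫_ℝ
        + (1 - normInf (y 0)) * Real.exp (ε*i) * (ts - ε*i) *
          ⟪had (G (z (i-1))) (oneM (z (i-1))), b'⟫_ℝ
      ≤ Real.exp (2*ε*i) * ⟪had (G (psum (y (i-1)) (z (i-1)))) (oneM (z (i-1))),
          a i + had (b i) (oneM (y (i-1)))⟫_ℝ
        + (1 - normInf (y 0)) * Real.exp (ε*i) * (ts - ε*i) *
          ⟪had (G (z (i-1))) (oneM (z (i-1))), b i⟫_ℝ
  hphase2 : ∀ i, k < i → i ≤ N →
    a i = y (i-1) ∧ b i ∈ P ∧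
    ∀ b' ∈ P,
      ⟪had (G (psum (y (i-1)) (z (i-1)))) (oneM (z (i-1))),
          had b' (oneM (y (i-1)))⟫_ℝ
      ≤ ⟪had (G (psum (y (i-1)) (z (i-1)))) (oneM (z (i-1))),
          had (b i) (oneM (y (i-1)))⟫_ℝ

/-- The potential function `φ(i) = e^{2(εi − t_s)}·F(y⁽ⁱ⁾ ⊛ z⁽ⁱ⁾)
  + (1−m)(1−ε)·e^{εi − 2t_s}·(t_s − εi)·F(z⁽ⁱ⁾)`. -/
def phi {n : ℕ} (F : Vec n → ℝ) (m ε ts : ℝ) (y z : ℕ → Vec n) (i : ℕ) : ℝ :=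
  Real.exp (2*(ε*i - ts)) * F (psum (y i) (z i))
    + (1 - m)*(1 - ε)*Real.exp (ε*i - 2*ts)*(ts - ε*i) * F (z i)

open Set

section Coordinates

variable {n : ℕ}

@[simp] theorem had_apply (x y : Vec n) (j : Fin n) : had x y j = x j * y j := rfl

@[simp] theorem psum_apply (x y : Vec n) (j : Fin n) : psum x y j = x j + y j - x j * y j := rfl

@[simp] theorem oneM_apply (x : Vec n) (j : Fin n) : oneM x j = 1 - x j := rfl

theorem psum_comm (x y : Vec n) : psum x y = psum y x := by
  ext j; simp only [psum_apply]; ring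

theorem psum_eq_add_had (x y : Vec n) : psum x y = x + had (oneM x) y := by
  ext j; simp only [psum_apply, PiLp.add_apply, had_apply, oneM_apply]; ring

theorem inner_had_oneM (g x y d : Vec n) :
    ⟪had g (oneM y), had d (oneM x)⟫_ℝ = ⟪g, had (oneM (psum x y)) d⟫_ℝ := by
  simp only [PiLp.inner_apply, had_apply, oneM_apply, psum_apply, RCLike.inner_apply,
    conj_trivial]
  exact Finset.sum_congr rfl fun j _ => by ring

theorem inBox_psum {x y : Vec n} (hx : inBox x) (hy : inBox y) : inBox (psum x y) := fun j => by
  have := hx j; have := hy j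
  simp only [psum_apply]
  constructor <;> nlinarith

theorem inBox_add {x d : Vec n} (hx : inBox x) (hd : ∀ j, 0 ≤ d j) (hxd : ∀ j, x j + d j ≤ 1) :
    inBox (x + d) := fun j => ⟨add_nonneg (hx j).1 (hd j), hxd j⟩

theorem inBox_add_smul {x d : Vec n} (hx : inBox x) (hd : ∀ j, 0 ≤ d j)
    (hxd : ∀ j, x j + d j ≤ 1) {t : ℝ} (ht : t ∈ Icc (0 : ℝ) 1) : inBox (x + t • d) :=
  fun j => by
    have := hx j; have := hd j; have := hxd j
    simp only [PiLp.add_apply, PiLp.smul_apply, smul_eq_mul]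
    constructor <;> nlinarith [ht.1, ht.2]

theorem le_normInf (x : Vec n) (j : Fin n) : x j ≤ normInf x :=
  (le_abs_self _).trans (le_ciSup (f := fun j => |x j|) (finite_range _).bddAbove j)

theorem normInf_nonneg (x : Vec n) : 0 ≤ normInf x :=
  Real.iSup_nonneg fun _ => abs_nonneg _

theorem norm_le_norm_of_abs_le {x y : Vec n} (h : ∀ j, |x j| ≤ |y j|) : ‖x‖ ≤ ‖y‖ := by
  simp only [EuclideanSpace.norm_eq, Real.norm_eq_abs, sq_abs]
  exact Real.sqrt_le_sqrt <| Finset.sum_le_sum fun j _ => sq_le_sq.mpr (h j)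

theorem norm_had_oneM_psum_le {x y d : Vec n} (hx : inBox x) (hy : inBox y)
    (hd : ∀ j, 0 ≤ d j) : ‖had (oneM (psum x y)) d‖ ≤ ‖had (oneM x) d‖ := by
  refine norm_le_norm_of_abs_le fun j => ?_
  obtain ⟨hx0, hx1⟩ := hx j
  obtain ⟨hy0, hy1⟩ := hy j
  have h := mul_nonneg (sub_nonneg.2 hx1) (hd j)
  simp only [had_apply, oneM_apply, psum_apply]
  rw [abs_of_nonneg h, abs_of_nonneg (by nlinarith [mul_nonneg h (sub_nonneg.2 hy1)])]
  nlinarith [mul_nonneg h hy0]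

theorem isBounded_setOf_inBox : Bornology.IsBounded {x : Vec n | inBox x} := by
  refine isBounded_iff_forall_norm_le.mpr
    ⟨‖(WithLp.toLp 2 fun _ => (1 : ℝ) : Vec n)‖, fun x hx => norm_le_norm_of_abs_le fun j => ?_⟩
  simp only [abs_one]
  rw [abs_of_nonneg (hx j).1]
  exact (hx j).2

theorem norm_had_oneM_le_diam {Q P : Set (Vec n)} (hQ : ∀ x ∈ Q, inBox x)
    (hP : ∀ x ∈ P, inBox x) (hPdown : downClosed P) {u v : Vec n} (hu : u ∈ Q) (hv : v ∈ P) :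
    ‖had (oneM u) v‖ ≤ Metric.diam ((Q + P) ∩ {x | inBox x}) := by
  have hub := hQ u hu
  have hvb := hP v hv
  have hw : had (oneM u) v ∈ P := hPdown _ v
    (fun j => by simpa using mul_nonneg (sub_nonneg.2 (hub j).2) (hvb j).1)
    (fun j => by simp only [had_apply, oneM_apply]; nlinarith [hub j, hvb j]) hv
  have h0 : (0 : Vec n) ∈ P := hPdown 0 v (fun _ => le_rfl) (fun j => (hvb j).1) hv
  have hmem₁ : u + had (oneM u) v ∈ (Q + P) ∩ {x | inBox x} :=
    ⟨add_mem_add hu hw, by rw [← psum_eq_add_had]; exact inBox_psum hub hvb⟩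
  have hmem₂ : u ∈ (Q + P) ∩ {x | inBox x} := ⟨by simpa using add_mem_add hu h0, hub⟩
  simpa [dist_eq_norm] using
    Metric.dist_le_diam_of_mem (isBounded_setOf_inBox.subset inter_subset_right) hmem₁ hmem₂

end Coordinates

theorem hasDerivAt_apply_add_smul {E : Type*} [NormedAddCommGroup E] [InnerProductSpace ℝ E]
    [CompleteSpace E] {F : E → ℝ} {g x d : E} {t : ℝ} (hF : HasGradientAt F g (x + t • d)) :
    HasDerivAt (fun s : ℝ => F (x + s • d)) ⟪g, d⟫_ℝ t := by
  have hline : HasDerivAt (fun s : ℝ => x + s • d) d t := by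
    simpa using ((hasDerivAt_id t).smul_const d).const_add x
  have := hF.hasFDerivAt.comp_hasDerivAt_of_eq t hline rfl
  rw [InnerProductSpace.toDual_apply_apply] at this
  exact this

namespace DRSubmodular

variable {n : ℕ} {F : Vec n → ℝ} {G : Vec n → Vec n}

theorem apply_add_sub_le (hF : DRSubmodular F) {u v d : Vec n}
    (hu : ∀ j, 0 ≤ u j) (huv : ∀ j, u j ≤ v j) (hd : ∀ j, 0 ≤ d j) (hvd : ∀ j, v j + d j ≤ 1) :
    F (v + d) - F v ≤ F (u + d) - F u := by
  classical
  -- add the coordinates of `d` one at a time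
  suffices key : ∀ s : Finset (Fin n), ∀ d : Vec n, (∀ j, 0 ≤ d j) → (∀ j, v j + d j ≤ 1) →
      (∀ j ∉ s, d j = 0) → F (v + d) - F v ≤ F (u + d) - F u from
    key Finset.univ d hd hvd (by simp)
  intro s
  induction s using Finset.induction_on with
  | empty =>
    intro d _ _ hd0
    obtain rfl : d = 0 := by ext j; exact hd0 j (Finset.notMem_empty j)
    simp
  | insert j s hj ih =>
    intro d hd hvd hds
    set e : Vec n := EuclideanSpace.single j (d j)
    have he : ∀ l, e l = if l = j then d j else 0 := fun l => PiLp.single_apply ..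
    have hd' : ∀ l, (d - e) l = if l = j then 0 else d l := fun l => by
      by_cases hl : l = j <;> simp [he, hl]
    have hd'0 : ∀ l, 0 ≤ (d - e) l := fun l => by rw [hd']; split_ifs <;> simp [hd l]
    have hd'le : ∀ l, (d - e) l ≤ d l := fun l => by rw [hd']; split_ifs <;> simp_all
    have hlast : F (v + (d - e) + e) - F (v + (d - e)) ≤
        F (u + (d - e) + e) - F (u + (d - e)) := by
      rcases (hd j).eq_or_lt with hdj | hdj
      · have he0 : e = 0 := by ext l; rw [he]; split_ifs <;> simp [← hdj]
        simp [he0]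
      have hvde : inBox (v + (d - e) + e) := by
        rw [add_assoc, sub_add_cancel]
        exact fun l => ⟨add_nonneg ((hu l).trans (huv l)) (hd l), hvd l⟩
      refine hF _ _ (fun l => ?_) (fun l => ?_) (fun l => ?_) (d j) hdj j hvde
      all_goals simp only [PiLp.add_apply]
      · constructor <;> linarith [hu l, huv l, hvd l, hd'0 l, hd'le l, hd l]
      · constructor <;> linarith [hu l, huv l, hvd l, hd'0 l, hd'le l, hd l]
      · linarith [huv l]
    have hfirst := ih (d - e) hd'0 (fun l => by linarith [hvd l, hd'le l])
      (fun l hl => by rw [hd']; split_ifs <;> simp_all)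
    simp only [add_assoc, sub_add_cancel] at hlast
    linarith

theorem inner_gradient_antitone (hF : DRSubmodular F)
    (hGrad : ∀ x, inBox x → HasGradientAt F (G x) x) {u v d : Vec n}
    (hu : ∀ j, 0 ≤ u j) (huv : ∀ j, u j ≤ v j) (hd : ∀ j, 0 ≤ d j) (hvd : ∀ j, v j + d j ≤ 1) :
    ⟪G v, d⟫_ℝ ≤ ⟪G u, d⟫_ℝ := by
  have hv : inBox v := fun j => ⟨(hu j).trans (huv j), by linarith [hvd j, hd j]⟩
  have hu' : inBox u := fun j => ⟨hu j, (huv j).trans (hv j).2⟩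
  have slope_tendsto (w : Vec n) (hw : inBox w) :=
    (hasDerivAt_apply_add_smul (x := w) (d := d) (t := 0)
      (by simpa using hGrad w hw)).tendsto_slope_zero_right
  refine le_of_tendsto_of_tendsto (slope_tendsto v hv) (slope_tendsto u hu') ?_
  filter_upwards [Ioc_mem_nhdsGT one_pos] with t ht
  simp only [zero_add, zero_smul, add_zero, smul_eq_mul]
  have hdt : ∀ j, 0 ≤ (t • d) j := fun j => by simpa using mul_nonneg ht.1.le (hd j)
  have hvdt : ∀ j, v j + (t • d) j ≤ 1 := fun j => by
    simp only [PiLp.smul_apply, smul_eq_mul]; nlinarith [ht.2, hd j, hvd j]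
  exact mul_le_mul_of_nonneg_left (hF.apply_add_sub_le hu huv hdt hvdt) (inv_nonneg.mpr ht.1.le)

theorem concaveOn_add_smul (hF : DRSubmodular F)
    (hGrad : ∀ x, inBox x → HasGradientAt F (G x) x) {x d : Vec n} (hx : inBox x)
    (hd : ∀ j, 0 ≤ d j) (hxd : ∀ j, x j + d j ≤ 1) :
    ConcaveOn ℝ (Icc (0 : ℝ) 1) (fun t => F (x + t • d)) := by
  have hderiv : ∀ t ∈ Icc (0 : ℝ) 1,
      HasDerivAt (fun s : ℝ => F (x + s • d)) ⟪G (x + t • d), d⟫_ℝ t := fun t ht =>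
    hasDerivAt_apply_add_smul (hGrad _ (inBox_add_smul hx hd hxd ht))
  refine AntitoneOn.concaveOn_of_deriv (convex_Icc 0 1)
    (fun t ht => (hderiv t ht).continuousAt.continuousWithinAt)
    (fun t ht => (hderiv t (interior_subset ht)).differentiableAt.differentiableWithinAt) ?_
  rw [interior_Icc]
  intro s hs t ht hst
  rw [(hderiv s (Ioo_subset_Icc_self hs)).deriv, (hderiv t (Ioo_subset_Icc_self ht)).deriv]
  -- the direction `(1 - t) • d` stays inside the box from `x + t • d`
  have hpos : 0 < 1 - t := sub_pos.mpr ht.2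
  have key := hF.inner_gradient_antitone hGrad (u := x + s • d) (v := x + t • d)
    (d := (1 - t) • d)
    (fun j => (inBox_add_smul hx hd hxd (Ioo_subset_Icc_self hs) j).1)
    (fun j => by simp only [PiLp.add_apply, PiLp.smul_apply, smul_eq_mul]; nlinarith [hd j])
    (fun j => by simpa using mul_nonneg hpos.le (hd j))
    (fun j => by simp only [PiLp.add_apply, PiLp.smul_apply, smul_eq_mul]; nlinarith [hxd j])
  simp only [real_inner_smul_right] at key
  exact le_of_mul_le_mul_left key hpos

theorem sub_le_inner_gradient (hF : DRSubmodular F)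
    (hGrad : ∀ x, inBox x → HasGradientAt F (G x) x) {x d : Vec n} (hx : inBox x)
    (hd : ∀ j, 0 ≤ d j) (hxd : ∀ j, x j + d j ≤ 1) :
    F (x + d) - F x ≤ ⟪G x, d⟫_ℝ := by
  have h := (hF.concaveOn_add_smul hGrad hx hd hxd).slope_le_of_hasDerivAt
    (left_mem_Icc.mpr zero_le_one) (right_mem_Icc.mpr zero_le_one) zero_lt_one
    (hasDerivAt_apply_add_smul (by simpa using hGrad x hx))
  simpa [slope] using h

theorem inner_gradient_le_sub (hF : DRSubmodular F)
    (hGrad : ∀ x, inBox x → HasGradientAt F (G x) x) {x d : Vec n} (hx : inBox x)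
    (hd : ∀ j, 0 ≤ d j) (hxd : ∀ j, x j + d j ≤ 1) :
    ⟪G (x + d), d⟫_ℝ ≤ F (x + d) - F x := by
  have h := (hF.concaveOn_add_smul hGrad hx hd hxd).le_slope_of_hasDerivAt
    (left_mem_Icc.mpr zero_le_one) (right_mem_Icc.mpr zero_le_one) zero_lt_one
    (hasDerivAt_apply_add_smul (by simpa using hGrad (x + d) (inBox_add hx hd hxd)))
  simpa [slope] using h

theorem le_apply_add_of_smooth (hF : DRSubmodular F)
    (hGrad : ∀ x, inBox x → HasGradientAt F (G x) x) {β : ℝ}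
    (hsmooth : ∀ u v : Vec n, inBox u → inBox v → ‖G u - G v‖ ≤ β * ‖u - v‖) {x d : Vec n}
    (hx : inBox x) (hd : ∀ j, 0 ≤ d j) (hxd : ∀ j, x j + d j ≤ 1) :
    F x + ⟪G x, d⟫_ℝ - β * ‖d‖ ^ 2 ≤ F (x + d) := by
  have hlip : ⟪G x - G (x + d), d⟫_ℝ ≤ β * ‖d‖ ^ 2 := calc
    _ ≤ ‖G x - G (x + d)‖ * ‖d‖ := real_inner_le_norm _ _
    _ ≤ β * ‖x - (x + d)‖ * ‖d‖ :=
        mul_le_mul_of_nonneg_right (hsmooth _ _ hx (inBox_add hx hd hxd)) (norm_nonneg d)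
    _ = β * ‖d‖ ^ 2 := by rw [sub_add_cancel_left, norm_neg]; ring
  have := hF.inner_gradient_le_sub hGrad hx hd hxd
  rw [inner_sub_left] at hlip
  linarith

theorem mul_le_apply_psum (hF : DRSubmodular F)
    (hGrad : ∀ x, inBox x → HasGradientAt F (G x) x) (hF0 : ∀ x, inBox x → 0 ≤ F x)
    {x p : Vec n} {c : ℝ} (hx : inBox x) (hp : inBox p) (hc0 : 0 ≤ c) (hc : c < 1)
    (hxc : ∀ j, x j ≤ c) :
    (1 - c) * F p ≤ F (psum x p) := by
  rcases hc0.eq_or_lt with rfl | hc0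
  · obtain rfl : x = 0 := by ext j; exact le_antisymm (hxc j) (hx j).1
    have : psum 0 p = p := by ext j; simp
    simp [this]
  -- `x ⊛ p` is the point at parameter `c` of the segment from `p` to `p + c⁻¹ • (1 - p) ⊙ x`
  set d : Vec n := c⁻¹ • had (oneM p) x
  have hd : ∀ j, 0 ≤ d j := fun j => by
    simpa [d] using
      mul_nonneg (inv_nonneg.mpr hc0.le) (mul_nonneg (by linarith [(hp j).2]) (hx j).1)
  have hpd : ∀ j, p j + d j ≤ 1 := fun j => by
    have : c⁻¹ * ((1 - p j) * x j) ≤ 1 - p j := by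
      rw [inv_mul_le_iff₀ hc0]; nlinarith [(hp j).2, hxc j]
    simpa [d] using (by linarith : p j + c⁻¹ * ((1 - p j) * x j) ≤ 1)
  have hconc := (hF.concaveOn_add_smul hGrad hp hd hpd).2 (left_mem_Icc.mpr zero_le_one)
    (right_mem_Icc.mpr zero_le_one) (sub_nonneg.mpr hc.le) hc0.le (sub_add_cancel 1 c)
  have hcd : p + c • d = psum x p := by
    rw [psum_comm, psum_eq_add_had, smul_smul, mul_inv_cancel₀ hc0.ne', one_smul]
  simp only [smul_eq_mul, mul_zero, mul_one, zero_add, zero_smul, add_zero, one_smul, hcd]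
    at hconc
  nlinarith [hF0 _ (inBox_add hp hd hpd)]

end DRSubmodular

theorem le_of_damped_recurrence {u : ℕ → ℝ} {ε c E : ℝ} {k N : ℕ} (hε0 : 0 ≤ ε) (hε1 : ε < 1)
    (hE : 0 ≤ E)
    (hstep : ∀ i, k ≤ i → i < N → (1 - ε) * u i + ε * (c * (1 - ε) ^ i) - E ≤ u (i + 1)) :
    ∀ i, k ≤ i → i ≤ N →
      c * (ε * i - ε * k) * (1 - ε) ^ ((i : ℤ) - 1) + (1 - ε) ^ (i - k) * u k - (i - k) * E
        ≤ u i := by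
  intro i hki
  induction i, hki using Nat.le_induction with
  | base => intro _; simp
  | succ i hki ih =>
    intro hiN
    have hpow : (1 - ε) ^ i = (1 - ε) * (1 - ε) ^ ((i : ℤ) - 1) := by
      have h : 1 - ε ≠ 0 := by linarith
      rw [zpow_sub_one₀ h, zpow_natCast, mul_comm, inv_mul_cancel_right₀ h]
    have hik : (0 : ℝ) ≤ i - k := sub_nonneg.mpr (by exact_mod_cast hki)
    have hIH := mul_le_mul_of_nonneg_left (ih (by omega)) (by linarith : (0 : ℝ) ≤ 1 - ε)
    have hs := hstep i hki (by omega)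
    rw [Nat.sub_add_comm hki, pow_succ]
    push_cast
    rw [add_sub_cancel_right, zpow_natCast]
    rw [hpow] at hs ⊢
    nlinarith [mul_nonneg (mul_nonneg hε0 hik) hE]

namespace Alg2Setting

variable {n : ℕ} {Q P : Set (Vec n)} {F : Vec n → ℝ} {G : Vec n → Vec n} {β ts ε : ℝ}
  {k N : ℕ} {y z a b : ℕ → Vec n}

theorem eps_lt_one (S : Alg2Setting Q P F G β ts ε k N y z a b) : ε < 1 := by
  linarith [S.hε30]

theorem z_succ (S : Alg2Setting Q P F G β ts ε k N y z a b) {i : ℕ} (hi : i + 1 ≤ N) :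
    z (i + 1) = z i + ε • had (oneM (z i)) (b (i + 1)) := by
  simpa using S.hzrec (i + 1) (by omega) hi

theorem y_succ_of_le (S : Alg2Setting Q P F G β ts ε k N y z a b) {i : ℕ} (hk : k ≤ i)
    (hi : i + 1 ≤ N) : y (i + 1) = y i := by
  rw [S.hyrec (i + 1) (by omega) hi, (S.hphase2 (i + 1) (by omega) hi).1, Nat.add_sub_cancel,
    ← add_smul, sub_add_cancel, one_smul]

theorem psum_succ_of_le (S : Alg2Setting Q P F G β ts ε k N y z a b) {i : ℕ} (hk : k ≤ i)
    (hi : i + 1 ≤ N) : psum (y (i + 1)) (z (i + 1)) =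
      psum (y i) (z i) + ε • had (oneM (psum (y i) (z i))) (b (i + 1)) := by
  rw [S.y_succ_of_le hk hi, S.z_succ hi]
  ext j
  simp only [psum_apply, PiLp.add_apply, PiLp.smul_apply, smul_eq_mul, had_apply, oneM_apply]
  ring

theorem b_succ_mem (S : Alg2Setting Q P F G β ts ε k N y z a b) {i : ℕ} (hi : i + 1 ≤ N) :
    b (i + 1) ∈ P := by
  by_cases hk : i + 1 ≤ k
  · exact (S.hphase1 (i + 1) (by omega) hk).2.1
  · exact (S.hphase2 (i + 1) (by omega) hi).2.1

theorem inBox_z_succ (S : Alg2Setting Q P F G β ts ε k N y z a b) {i : ℕ} (hi : i + 1 ≤ N)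
    (hz : inBox (z i)) : inBox (z (i + 1)) := fun j => by
  obtain ⟨hz0, hz1⟩ := hz j
  obtain ⟨hb0, hb1⟩ := S.hPbox _ (S.b_succ_mem hi) j
  have hε0 := S.hε0
  have hε1 := S.eps_lt_one
  rw [S.z_succ hi]
  simp only [PiLp.add_apply, PiLp.smul_apply, smul_eq_mul, had_apply, oneM_apply]
  constructor
  · nlinarith [mul_nonneg hε0.le (mul_nonneg (sub_nonneg.2 hz1) hb0)]
  · nlinarith [mul_nonneg (sub_nonneg.2 hz1) (by nlinarith : 0 ≤ 1 - ε * b (i + 1) j)]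

theorem invariant (S : Alg2Setting Q P F G β ts ε k N y z a b) :
    ∀ i ≤ N, y i ∈ Q ∧ inBox (z i) ∧
      ∀ j, (1 - normInf (y 0)) * (1 - ε) ^ i ≤ (1 - y i j) * (1 - z i j) := by
  intro i
  induction i with
  | zero =>
    intro _
    refine ⟨S.hy0Q, by simp [S.hz0, inBox], fun j => ?_⟩
    have := le_normInf (y 0) j
    simp only [S.hz0, pow_zero, mul_one, PiLp.zero_apply, sub_zero]
    linarith
  | succ i ih =>
    intro hi
    obtain ⟨hyQ, hzB, hprod⟩ := ih (by omega)
    have hyB := S.hQbox _ hyQ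
    have hbB := S.hPbox _ (S.b_succ_mem hi)
    have hε0 := S.hε0
    have hε1 := S.eps_lt_one
    have hprod' := fun j => mul_le_mul_of_nonneg_left (hprod j) (by linarith : (0 : ℝ) ≤ 1 - ε)
    have hz : ∀ j, z (i + 1) j = z i j + ε * ((1 - z i j) * b (i + 1) j) := fun j => by
      rw [S.z_succ hi]; rfl
    rw [pow_succ]
    by_cases hk : i + 1 ≤ k
    · obtain ⟨haQ, -, hab, -⟩ := S.hphase1 (i + 1) (by omega) hk
      have hy : y (i + 1) = (1 - ε) • y i + ε • a (i + 1) := by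
        simpa using S.hyrec (i + 1) (by omega) hi
      refine ⟨hy ▸ S.hQconv hyQ haQ (by linarith) hε0.le (by ring), S.inBox_z_succ hi hzB,
        fun j => ?_⟩
      rw [hz j, hy]
      simp only [PiLp.add_apply, PiLp.smul_apply, smul_eq_mul]
      obtain ⟨hy0, -⟩ := hyB j
      obtain ⟨-, hz1⟩ := hzB j
      obtain ⟨hb0, hb1⟩ := hbB j
      have hεb : 0 ≤ 1 - ε * b (i + 1) j := by nlinarith
      -- the gain over `(1 - ε)(1 - y)(1 - z)` is
      -- `(1 - z) ε [(1 - a - b)(1 - ε b) + b (ε (1 - b) + y (1 - ε))]`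
      have h₁ := mul_nonneg (mul_nonneg (mul_nonneg (sub_nonneg.2 hz1) hε0.le)
        (by linarith [(hab j).2] : 0 ≤ 1 - a (i + 1) j - b (i + 1) j)) hεb
      have h₂ := mul_nonneg (mul_nonneg (mul_nonneg (sub_nonneg.2 hz1) hε0.le) hb0)
        (add_nonneg (mul_nonneg hε0.le (sub_nonneg.2 hb1))
          (mul_nonneg hy0 (by linarith : 0 ≤ 1 - ε)))
      nlinarith [hprod' j]
    · rw [S.y_succ_of_le (by omega) hi]
      refine ⟨hyQ, S.inBox_z_succ hi hzB, fun j => ?_⟩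
      rw [hz j]
      have h := mul_nonneg (mul_nonneg (sub_nonneg.2 (hyB j).2) (sub_nonneg.2 (hzB j).2))
        (mul_nonneg hε0.le (sub_nonneg.2 (hbB j).2))
      nlinarith [hprod' j]

theorem sub_le_inner_gradient_of_le (S : Alg2Setting Q P F G β ts ε k N y z a b) {p₂ : Vec n}
    (hp₂ : p₂ ∈ P) {i : ℕ} (hk : k ≤ i) (hi : i + 1 ≤ N) :
    (1 - normInf (y 0)) * (1 - ε) ^ i * F p₂ - F (psum (y i) (z i))
      ≤ ⟪G (psum (y i) (z i)), had (oneM (psum (y i) (z i))) (b (i + 1))⟫_ℝ := by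
  set w := psum (y i) (z i)
  set c := (1 - normInf (y 0)) * (1 - ε) ^ i
  obtain ⟨hyQ, hzB, hprod⟩ := S.invariant i (by omega)
  have hwB : inBox w := inBox_psum (S.hQbox _ hyQ) hzB
  have hp₂B := S.hPbox _ hp₂
  have hε0 := S.hε0
  have hε1 := S.eps_lt_one
  have hc0 : 0 < c := mul_pos (by linarith [S.hm1]) (pow_pos (by linarith) i)
  have hc1 : c ≤ 1 := mul_le_one₀ (by linarith [normInf_nonneg (y 0)])
    (pow_nonneg (by linarith) i) (pow_le_one₀ (by linarith) (by linarith))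
  have hw : ∀ j, w j ≤ 1 - c := fun j => by
    have := hprod j; simp only [w, psum_apply]; nlinarith
  have hoptimal := (S.hphase2 (i + 1) (by omega) hi).2.2 p₂ hp₂
  simp only [Nat.add_sub_cancel, inner_had_oneM] at hoptimal
  calc c * F p₂ - F w ≤ F (psum w p₂) - F w := by
        have := S.hDR.mul_le_apply_psum S.hGrad S.hF0 hwB hp₂B (by linarith) (by linarith) hw
        rw [sub_sub_cancel] at this
        linarith
    _ ≤ ⟪G w, had (oneM w) p₂⟫_ℝ := by
        rw [psum_eq_add_had]
        refine S.hDR.sub_le_inner_gradient S.hGrad hwB (fun j => ?_) (fun j => ?_)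
        · simpa using mul_nonneg (sub_nonneg.2 (hwB j).2) (hp₂B j).1
        · simp only [had_apply, oneM_apply]; nlinarith [hwB j, hp₂B j]
    _ ≤ ⟪G w, had (oneM w) (b (i + 1))⟫_ℝ := hoptimal

theorem le_apply_psum_succ (S : Alg2Setting Q P F G β ts ε k N y z a b) {p₂ : Vec n}
    (hp₂ : p₂ ∈ P) {i : ℕ} (hk : k ≤ i) (hi : i + 1 ≤ N) :
    (1 - ε) * F (psum (y i) (z i)) + ε * ((1 - normInf (y 0)) * F p₂ * (1 - ε) ^ i)
        - ε ^ 2 * β * Metric.diam ((Q + P) ∩ {x | inBox x}) ^ 2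
      ≤ F (psum (y (i + 1)) (z (i + 1))) := by
  set w := psum (y i) (z i)
  obtain ⟨hyQ, hzB, -⟩ := S.invariant i (by omega)
  have hyB := S.hQbox _ hyQ
  have hbP := S.b_succ_mem hi
  have hbB := S.hPbox _ hbP
  have hwB : inBox w := inBox_psum hyB hzB
  have hε0 := S.hε0
  set δ : Vec n := ε • had (oneM w) (b (i + 1))
  have hδ0 : ∀ j, 0 ≤ δ j := fun j => by
    simpa [δ] using mul_nonneg hε0.le (mul_nonneg (sub_nonneg.2 (hwB j).2) (hbB j).1)
  have hwδ : ∀ j, w j + δ j ≤ 1 := fun j => by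
    simp only [δ, PiLp.smul_apply, smul_eq_mul, had_apply, oneM_apply]
    nlinarith [hwB j, hbB j, S.eps_lt_one, mul_nonneg (sub_nonneg.2 (hwB j).2) (hbB j).1]
  have hδ : ‖δ‖ ^ 2 ≤ ε ^ 2 * Metric.diam ((Q + P) ∩ {x | inBox x}) ^ 2 := by
    rw [← mul_pow, norm_smul, Real.norm_of_nonneg hε0.le]
    refine pow_le_pow_left₀ (by positivity) (mul_le_mul_of_nonneg_left ?_ hε0.le) 2
    exact (norm_had_oneM_psum_le hyB hzB fun j => (hbB j).1).trans
      (norm_had_oneM_le_diam S.hQbox S.hPbox S.hPdown hyQ hbP)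
  have hsmooth := S.hDR.le_apply_add_of_smooth S.hGrad S.hsmooth hwB hδ0 hwδ
  rw [real_inner_smul_right] at hsmooth
  rw [S.psum_succ_of_le hk hi]
  nlinarith [mul_le_mul_of_nonneg_left (S.sub_le_inner_gradient_of_le hp₂ hk hi) hε0.le,
    mul_le_mul_of_nonneg_left hδ S.hβ.le]

end Alg2Setting

/-- Lemma 4.19 / `lem:bound2GF`: there is an absolute constant `C > 0`
such that, in the Algorithm 2 setting, with `wⱼ = y⁽ʲ⁾ ⊛ z⁽ʲ⁾`, for every integer
`t_s/ε ≤ i ≤ 1/ε`: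
`F(wᵢ) ≥ (1−m)(εi − t_s)(1−ε)^{i−1}·F(p₂*) + (1−ε)^{i − t_s/ε}·F(w_{t_s/ε})
  − (i − t_s/ε)·Cε²βD²`. -/
theorem stmt_17 : ∃ C : ℝ, 0 < C ∧
    ∀ (n : ℕ) (Q P : Set (Vec n)) (F : Vec n → ℝ) (G : Vec n → Vec n)
      (β ts ε : ℝ) (k N : ℕ) (y z a b : ℕ → Vec n),
    Alg2Setting Q P F G β ts ε k N y z a b →
    ∀ q p o p₂ : Vec n, q ∈ Q → p ∈ P → (∀ j, q j + p j ≤ 1) → o = q + p → p₂ ∈ P →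
    ∀ m D : ℝ, m = normInf (y 0) →
    D = Metric.diam ((Q + P) ∩ {x : Vec n | inBox x}) →
    ∀ i, k ≤ i → i ≤ N →
      (1 - m) * (ε*i - ts) * (1 - ε)^((i : ℤ) - 1) * F p₂
        + (1 - ε)^(i - k) * F (psum (y k) (z k))
        - ((i : ℝ) - (k : ℝ)) * C * ε^2 * β * D^2
      ≤ F (psum (y i) (z i)) := by
  refine ⟨1, one_pos, ?_⟩
  intro n Q P F G β ts ε k N y z a b S _ _ _ p₂ _ _ _ _ hp₂ m D hm hD i hki hiN
  have hE : 0 ≤ ε ^ 2 * β * D ^ 2 := by have := S.hβ; positivity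
  have := le_of_damped_recurrence (u := fun i => F (psum (y i) (z i))) (c := (1 - m) * F p₂)
    S.hε0.le S.eps_lt_one hE
    (fun i hk hi => by rw [hm, hD]; exact S.le_apply_psum_succ hp₂ hk hi) i hki hiN
  rw [← S.hk]
  linear_combination this
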